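/- For every integer k ≥ 2, ẽ⁽¹⁾ₖ * τₖ = 0 in ℚ[Sₖ]; explicitly, Σ_{σ∈Sₖ} aₖ^{1, des(σ)+1}·στₖσ⁻¹ = 0. -/

import Mathlib

noncomputable section

/-- Number of descents of a permutation of `Fin n`. -/
def descents {n : ℕ} (σ : Equiv.Perm (Fin n)) : ℕ :=
  (Finset.univ.filter fun p : Fin n × Fin n =>
    (p.2 : ℕ) = (p.1 : ℕ) + 1 ∧ σ p.2 < σ p.1).card

/-- `aCoeff n l j` is the coefficient of `X^l` in `(1/n!) ∏_{i=1}^n (X - j + i) ∈ ℚ[X]`. -/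
def aCoeff (n l j : ℕ) : ℚ :=
  (((n.factorial : ℚ))⁻¹ • ∏ i ∈ Finset.Icc 1 n,
    (Polynomial.X + Polynomial.C ((i : ℚ) - (j : ℚ)))).coeff l

/-- The `k`-cycle `τₖ` sending `1 ↦ k` and `i ↦ i-1` for `2 ≤ i ≤ k`. -/
def tau (k : ℕ) : Equiv.Perm (Fin k) := (finRotate k)⁻¹

/-!
Replacing `σ` by `σ ρ` with `ρ` a power of `τₖ` does not change `σ τₖ σ⁻¹`, so `k` times the sum
equals `∑_σ (σ τₖ σ⁻¹) · ∑_ρ a(des(σ ρ) + 1)`. Let `d` be the number of cyclic descents of `σ`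
(descents of `j ↦ σ j` with `j` read modulo `k`), so that `1 ≤ d < k`. The descents of a rotation
`σ ρ` are its cyclic descents except the one at the wrap-around position, so `des(σ ρ) + 1` is `d`
for `d` of the `k` rotations and `d + 1` for the others. The inner sum `d a(d) + (k - d) a(d + 1)`
vanishes: `∏_{i=1}^k (X - j + i) · (X - j) = ∏_{i=1}^k (X - j - 1 + i) · (X + k - j)`, and for
`1 ≤ j < k` both products vanish at `0`, so comparing coefficients of `X` gives
`-j a(j) = (k - j) a(j + 1)`.
-/

open Polynomial Finset

theorem prod_Icc_one_eq_prod_range_succ {M : Type*} [CommMonoid M] (k : ℕ) (f : ℕ → M) :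
    ∏ i ∈ Icc 1 k, f i = ∏ i ∈ range k, f (i + 1) := by
  rw [← Ico_add_one_right_eq_Icc, prod_Ico_eq_prod_range]
  simp only [add_comm 1, Nat.add_sub_cancel]

theorem prod_Icc_X_add_C_mul_X_add_C (k j : ℕ) :
    (∏ i ∈ Icc 1 k, (X + C ((i : ℚ) - j))) * (X + C (0 - (j : ℚ))) =
      (∏ i ∈ Icc 1 k, (X + C ((i : ℚ) - (j + 1 : ℕ)))) * (X + C ((k : ℚ) - j)) := by
  rw [prod_Icc_one_eq_prod_range_succ, prod_Icc_one_eq_prod_range_succ]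
  calc _ = ∏ i ∈ range (k + 1), (X + C ((i : ℚ) - j)) := by
        rw [prod_range_succ']; push_cast; rfl
    _ = _ := by rw [prod_range_succ]; push_cast; simp only [add_sub_add_right_eq_sub]

theorem coeff_one_mul_X_add_C (p : ℚ[X]) (c : ℚ) :
    (p * (X + C c)).coeff 1 = p.coeff 0 + c * p.coeff 1 := by
  rw [mul_add, coeff_add, coeff_mul_X, coeff_mul_C, mul_comm]

theorem coeff_zero_prod_Icc_X_add_C {k j : ℕ} (h1 : 1 ≤ j) (h2 : j ≤ k) :
    (∏ i ∈ Icc 1 k, (X + C ((i : ℚ) - j))).coeff 0 = 0 := by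
  rw [coeff_zero_eq_eval_zero, eval_prod]
  exact prod_eq_zero (mem_Icc.mpr ⟨h1, h2⟩) (by simp)

theorem aCoeff_one_recurrence {k j : ℕ} (h1 : 1 ≤ j) (h2 : j < k) :
    j * aCoeff k 1 j + (k - j) * aCoeff k 1 (j + 1) = 0 := by
  have key := congrArg (coeff · 1) (prod_Icc_X_add_C_mul_X_add_C k j)
  simp only [coeff_one_mul_X_add_C, coeff_zero_prod_Icc_X_add_C h1 h2.le,
    coeff_zero_prod_Icc_X_add_C (by omega : 1 ≤ j + 1) h2] at key
  simp only [aCoeff, coeff_smul, smul_eq_mul]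
  linear_combination (-(k.factorial : ℚ)⁻¹) * key

def cyclicDescents {n : ℕ} [NeZero n] (σ : Equiv.Perm (Fin n)) : Finset (Fin n) :=
  {j | σ (j + 1) < σ j}

theorem mem_cyclicDescents {n : ℕ} [NeZero n] {σ : Equiv.Perm (Fin n)} {j : Fin n} :
    j ∈ cyclicDescents σ ↔ σ (j + 1) < σ j := by
  simp [cyclicDescents]

theorem Fin.val_eq_val_add_one_iff {n : ℕ} {i j : Fin (n + 1)} :
    (j : ℕ) = i + 1 ↔ i ≠ Fin.last n ∧ j = i + 1 := by
  rw [Fin.ext_iff, Fin.val_add_one]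
  split_ifs <;> simp_all [Fin.val_last]; omega

theorem descents_eq_card_cyclicDescents_erase_last {n : ℕ} (σ : Equiv.Perm (Fin (n + 1))) :
    descents σ = #((cyclicDescents σ).erase (Fin.last n)) := by
  refine (card_nbij' (fun j => (j, j + 1)) Prod.fst ?_ ?_ (fun _ _ => rfl) ?_).symm
  · intro j hj
    simp_all [Fin.val_eq_val_add_one_iff, mem_cyclicDescents]
  · rintro ⟨i, j⟩ h
    obtain ⟨⟨hi, rfl⟩, h⟩ : (i ≠ Fin.last n ∧ j = i + 1) ∧ σ j < σ i := by
      simpa [Fin.val_eq_val_add_one_iff] using h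
    simp [mem_cyclicDescents, hi, h]
  · rintro ⟨i, j⟩ h
    simp_all [Fin.val_eq_val_add_one_iff]

theorem cyclicDescents_mul_subRight {n : ℕ} [NeZero n] (σ : Equiv.Perm (Fin n)) (t : Fin n) :
    cyclicDescents (σ * Equiv.subRight t) =
      (cyclicDescents σ).map (Equiv.addRight t).toEmbedding := by
  ext j
  simp [mem_cyclicDescents, mem_map_equiv, ← sub_eq_add_neg, sub_add_eq_add_sub]

theorem cyclicDescents_nonempty {n : ℕ} (σ : Equiv.Perm (Fin (n + 2))) :
    (cyclicDescents σ).Nonempty := by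
  have hσ : σ (σ⁻¹ (Fin.last _)) = Fin.last _ := σ.apply_symm_apply _
  refine ⟨σ⁻¹ (Fin.last _), mem_cyclicDescents.mpr ?_⟩
  rw [hσ]
  refine (Fin.le_last _).lt_of_ne fun h => ?_
  simpa using σ.injective (h.trans hσ.symm)

theorem card_cyclicDescents_lt {n : ℕ} [NeZero n] (σ : Equiv.Perm (Fin n)) :
    #(cyclicDescents σ) < n := by
  refine (card_lt_univ_of_notMem (s := cyclicDescents σ) (x := σ⁻¹ 0) fun h => ?_).trans_eq
    (Fintype.card_fin n)
  simpa [Fin.lt_def] using mem_cyclicDescents.mp h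

theorem sum_card_erase_map_addRight {G M : Type*} [AddGroup G] [Fintype G] [DecidableEq G]
    [AddCommMonoid M] (D : Finset G) (x : G) (f : ℕ → M) :
    ∑ t : G, f (#((D.map (Equiv.addRight t).toEmbedding).erase x) + 1) =
      #D • f #D + (Fintype.card G - #D) • f (#D + 1) := by
  have hterm : ∀ t, f (#((D.map (Equiv.addRight t).toEmbedding).erase x) + 1) =
      if x - t ∈ D then f #D else f (#D + 1) := fun t => by
    split_ifs with h
    · rw [card_erase_add_one (by simpa [mem_map_equiv, sub_eq_add_neg] using h), card_map]
    · rw [erase_eq_of_notMem (by simpa [mem_map_equiv, sub_eq_add_neg] using h), card_map]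
  rw [Fintype.sum_equiv (Equiv.subLeft x) _ (fun j => if j ∈ D then f #D else f (#D + 1)) hterm,
    sum_ite, sum_const, sum_const, filter_mem_eq_inter, univ_inter, filter_notMem_eq_sdiff,
    card_univ_sdiff]

theorem sum_aCoeff_descents_mul_subRight (n : ℕ) (σ : Equiv.Perm (Fin (n + 2))) :
    ∑ t : Fin (n + 2), aCoeff (n + 2) 1 (descents (σ * Equiv.subRight t) + 1) = 0 := by
  have hlt := card_cyclicDescents_lt σ
  simp only [descents_eq_card_cyclicDescents_erase_last, cyclicDescents_mul_subRight]
  rw [sum_card_erase_map_addRight, Fintype.card_fin, nsmul_eq_mul, nsmul_eq_mul,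
    Nat.cast_sub hlt.le]
  exact aCoeff_one_recurrence (cyclicDescents_nonempty σ).card_pos hlt

theorem tau_succ_eq_subRight_one (n : ℕ) : tau (n + 1) = Equiv.subRight 1 := by
  ext i
  simp [tau]

theorem sum_conj_eq_sum_conj_mul_right {G M : Type*} [Group G] [Fintype G] [AddCommMonoid M]
    {g ρ : G} (h : Commute ρ g) (F : G → G → M) :
    ∑ σ, F (σ * g * σ⁻¹) σ = ∑ σ, F (σ * g * σ⁻¹) (σ * ρ) :=
  (Fintype.sum_equiv (Equiv.mulRight ρ) _ _ fun σ => by simp [mul_assoc, h.eq]).symm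

/-- `ẽ⁽¹⁾ₖ * τₖ = 0` in `ℚ[Sₖ]`:
`Σ_{σ∈Sₖ} aₖ^{1, des(σ)+1}·στₖσ⁻¹ = 0`. -/
theorem eulerian_one_conj_tau_eq_zero (k : ℕ) (hk : 2 ≤ k) :
    ∑ σ : Equiv.Perm (Fin k),
      MonoidAlgebra.single (σ * tau k * σ⁻¹) (aCoeff k 1 (descents σ + 1)) = 0 := by
  obtain ⟨n, rfl⟩ : ∃ n, k = n + 2 := ⟨k - 2, by omega⟩
  set S := ∑ σ : Equiv.Perm (Fin (n + 2)),
      MonoidAlgebra.single (σ * tau (n + 2) * σ⁻¹) (aCoeff (n + 2) 1 (descents σ + 1))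
  have hcomm (t : Fin (n + 2)) : Commute (Equiv.subRight t) (tau (n + 2)) := by
    rw [tau_succ_eq_subRight_one]
    exact Equiv.ext fun i => sub_right_comm i 1 t
  have hS : ((n + 2 : ℕ) : ℚ) • S = 0 :=
    calc ((n + 2 : ℕ) : ℚ) • S = ∑ t : Fin (n + 2), S := by
          rw [Nat.cast_smul_eq_nsmul, sum_const, card_univ, Fintype.card_fin]
      _ = ∑ t : Fin (n + 2), ∑ σ : Equiv.Perm (Fin (n + 2)),
          MonoidAlgebra.single (σ * tau (n + 2) * σ⁻¹)
            (aCoeff (n + 2) 1 (descents (σ * Equiv.subRight t) + 1)) :=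
          sum_congr rfl fun t _ => sum_conj_eq_sum_conj_mul_right (hcomm t)
            fun g σ => MonoidAlgebra.single g (aCoeff (n + 2) 1 (descents σ + 1))
      _ = ∑ σ : Equiv.Perm (Fin (n + 2)), MonoidAlgebra.single (σ * tau (n + 2) * σ⁻¹)
            (∑ t : Fin (n + 2), aCoeff (n + 2) 1 (descents (σ * Equiv.subRight t) + 1)) := by
          rw [sum_comm]
          exact sum_congr rfl fun σ _ => (map_sum (MonoidAlgebra.singleAddHom _) _ _).symm
      _ = 0 := by simp [sum_aCoeff_descents_mul_subRight]
  exact (smul_eq_zero.mp hS).resolve_left (by positivity)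

end
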